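/- Let s be a positive measure with compact support contained in an interval Δ ⊂ ℝ with infinitely many points in its support. Then for every z ∈ ℂ \ Δ, the Cauchy transform ŝ(z) = ∫ ds(x)/(z−x) is nonzero. -/

import Mathlib

/-! For `z ∉ Δ` all values `(z - x)⁻¹`, `x ∈ Δ`, lie in one open half-plane `{w | 0 < re (u * w)}`:
take `u = I * im z` when `z` is not real, and `u = ±1` when `z` is real, since then the interval `Δ`
lies on one side of `z`. Integrating against `s ≠ 0` gives `0 < re (u * ŝ z)`. -/

open MeasureTheory Metric Set Complex

noncomputable section

/-- The Cauchy transform of a measure on ℝ, as a function of a complex variable. -/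
def cauchy (s : Measure ℝ) (z : ℂ) : ℂ := ∫ x, (z - (x : ℂ))⁻¹ ∂s

/-- The support of a measure on ℝ. -/
def msupport (s : Measure ℝ) : Set ℝ := {x | ∀ ε > 0, 0 < s (ball x ε)}

theorem msupport_eq_support (s : Measure ℝ) : msupport s = s.support := by
  ext x
  exact (nhds_basis_ball.mem_measureSupport).symm

theorem Set.OrdConnected.subset_Iio_or_subset_Ioi {α : Type*} [LinearOrder α] {s : Set α}
    (hs : s.OrdConnected) {r : α} (hr : r ∉ s) : s ⊆ Iio r ∨ s ⊆ Ioi r := by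
  by_contra! h
  obtain ⟨⟨a, ha, hra⟩, ⟨b, hb, hbr⟩⟩ := And.imp not_subset.mp not_subset.mp h
  exact hr (hs.out hb ha ⟨not_lt.mp hbr, not_lt.mp hra⟩)

theorem MeasureTheory.integral_pos_of_ae_pos {α : Type*} [MeasurableSpace α] {μ : Measure α}
    [NeZero μ] {f : α → ℝ} (hf : ∀ᵐ x ∂μ, 0 < f x) (hfi : Integrable f μ) :
    0 < ∫ x, f x ∂μ := by
  rw [integral_pos_iff_support_of_nonneg_ae (hf.mono fun _ hx ↦ hx.le) hfi]
  exact (Measure.measure_univ_pos.mpr (NeZero.ne μ)).trans_le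
    (measure_mono_ae (hf.mono fun _ hx _ ↦ hx.ne'))

theorem MeasureTheory.integral_ne_zero_of_ae_re_mul_pos {α : Type*} [MeasurableSpace α]
    {μ : Measure α} [NeZero μ] {f : α → ℂ} (hfi : Integrable f μ) (u : ℂ)
    (hf : ∀ᵐ x ∂μ, 0 < (u * f x).re) : ∫ x, f x ∂μ ≠ 0 := by
  intro h
  have hpos := integral_pos_of_ae_pos hf (hfi.const_mul u).re
  have hre := integral_re (hfi.const_mul u)
  simp only [RCLike.re_to_complex] at hre
  rw [hre, integral_const_mul, h, mul_zero, zero_re] at hpos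
  exact hpos.false

theorem re_I_mul_im_mul_inv_sub_pos {z : ℂ} (hz : z.im ≠ 0) (x : ℝ) :
    0 < (I * z.im * (z - x)⁻¹).re := by
  have hn : 0 < normSq (z - x) := normSq_pos.mpr fun h ↦ hz (by simpa using congrArg im h)
  have hre : (I * z.im * (z - x)⁻¹).re = z.im ^ 2 / normSq (z - x) := by
    simp only [mul_re, I_re, ofReal_re, zero_mul, I_im, ofReal_im, mul_zero, sub_self, inv_re,
      sub_re, mul_im, one_mul, zero_add, inv_im, sub_im, sub_zero, zero_sub]
    ring
  rw [hre]
  positivity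

theorem exists_forall_re_mul_inv_sub_pos {Δ : Set ℝ} (hΔ : Δ.OrdConnected) {z : ℂ}
    (hz : z ∉ ofReal '' Δ) : ∃ u : ℂ, ∀ x ∈ Δ, 0 < (u * (z - x)⁻¹).re := by
  by_cases him : z.im = 0
  · obtain ⟨r, rfl⟩ : ∃ r : ℝ, (r : ℂ) = z := ⟨z.re, Complex.ext rfl him.symm⟩
    rcases hΔ.subset_Iio_or_subset_Ioi (fun hr ↦ hz ⟨r, hr, rfl⟩) with hlt | hgt
    · refine ⟨1, fun x hx ↦ ?_⟩
      have := sub_pos.mpr (mem_Iio.mp (hlt hx))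
      simpa [← ofReal_sub, ← ofReal_inv] using this
    · refine ⟨-1, fun x hx ↦ ?_⟩
      have := sub_pos.mpr (mem_Ioi.mp (hgt hx))
      simpa [← ofReal_sub, ← ofReal_inv, ← inv_neg] using this
  · exact ⟨I * z.im, fun x _ ↦ re_I_mul_im_mul_inv_sub_pos him x⟩

theorem integrable_inv_sub_of_isCompact_support {s : Measure ℝ} [IsFiniteMeasureOnCompacts s] {z : ℂ}
    (hcomp : IsCompact s.support) (hz : z ∉ ofReal '' s.support) :
    Integrable (fun x : ℝ ↦ (z - x)⁻¹) s := by
  have hcont : ContinuousOn (fun x : ℝ ↦ (z - x)⁻¹) s.support :=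
    (continuous_const.sub continuous_ofReal).continuousOn.inv₀
      fun x hx ↦ sub_ne_zero.mpr fun h ↦ hz ⟨x, hx, h.symm⟩
  have := hcont.integrableOn_compact (μ := s) hcomp
  rwa [IntegrableOn,
    Measure.restrict_eq_self_of_ae_mem (s := s.support) Measure.support_mem_ae] at this

/-- for a positive measure `s` with compact support contained in an interval
`Δ ⊂ ℝ`, with infinitely many points in its support, the Cauchy transform
`ŝ(z) = ∫ ds(x)/(z − x)` does not vanish at any `z ∈ ℂ \ Δ`. -/
theorem cauchy_transform_ne_zero
    (s : Measure ℝ) [IsFiniteMeasure s] (Δ : Set ℝ) (hΔ : Δ.OrdConnected)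
    (hcomp : IsCompact (msupport s)) (hsupp : msupport s ⊆ Δ)
    (hinf : (msupport s).Infinite) :
    ∀ z : ℂ, z ∉ Complex.ofReal '' Δ → cauchy s z ≠ 0 := by
  intro z hz
  rw [msupport_eq_support] at hcomp hsupp hinf
  have : NeZero s := ⟨Measure.nonempty_support_iff.mp hinf.nonempty⟩
  obtain ⟨u, hu⟩ := exists_forall_re_mul_inv_sub_pos hΔ hz
  refine integral_ne_zero_of_ae_re_mul_pos ?_ u ?_
  · exact integrable_inv_sub_of_isCompact_support hcomp fun h ↦ hz (image_mono hsupp h)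
  · filter_upwards [Measure.support_mem_ae] with x hx using hu x (hsupp hx)
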